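/- Let d ≥ 1, let α = (α_1,…,α_d) with each α_j > −1, and let k, m ∈ ℕ^d be multi-indices with |m| = |k| + 1. Then for every i ∈ {1,…,d}, ∫_{(0,∞)^d} x_i L^α_k(x) L^α_m(x) x^α e^{−(x_1+…+x_d)} dx = −(k_i+1) · ∏_{j=1}^d Γ((k+e_i)_j+α_j+1)/((k+e_i)_j)! if m = k + e_i, and = 0 otherwise, where e_i is the i-th standard unit multi-index. (This computes the matrix elements of the creation operators a⁺_{i|n} associated with the multiple Laguerre polynomials: a⁺_{i|n} L^α_k = −(k_i+1) L^α_{k+e_i}.) -/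

import Mathlib

open MeasureTheory

/-- The generalized Laguerre polynomials, as real functions: `L^a_0 = 1`,
`L^a_1(x) = a + 1 - x`, and `x L^a_n = -(n+1)L^a_{n+1} + (2n+a+1)L^a_n - (n+a)L^a_{n-1}`,
solved for `L^a_{n+1}`. -/
noncomputable def laguerreP (a : ℝ) : ℕ → ℝ → ℝ
  | 0, _ => 1
  | 1, x => a + 1 - x
  | (n + 2), x =>
      ((2 * ((n : ℝ) + 1) + a + 1 - x) * laguerreP a (n + 1) x -
        (((n : ℝ) + 1) + a) * laguerreP a n x) / ((n : ℝ) + 2)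

/-- The multiple Laguerre polynomial on `ℝ₊^d`: `L^α_k(x) = ∏ᵢ L^{αᵢ}_{kᵢ}(xᵢ)`. -/
noncomputable def multiLaguerre {d : ℕ} (α : Fin d → ℝ) (k : Fin d → ℕ)
    (x : Fin d → ℝ) : ℝ :=
  ∏ i, laguerreP (α i) (k i) (x i)

open Polynomial Finset
noncomputable def lagPoly (a : ℝ) : ℕ → Polynomial ℝ
  | 0 => 1
  | 1 => C (a + 1) - X
  | (n + 2) => Polynomial.C (((n : ℝ) + 2)⁻¹) *
      ((C (2 * ((n : ℝ) + 1) + a + 1) - X) * lagPoly a (n + 1)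
        - C ((n : ℝ) + 1 + a) * lagPoly a n)

lemma lagPoly_eval (a x : ℝ) : ∀ n, (lagPoly a n).eval x = laguerreP a n x
  | 0 => by simp [lagPoly, laguerreP]
  | 1 => by simp [lagPoly, laguerreP]
  | (n + 2) => by
      simp only [lagPoly, laguerreP, lagPoly_eval a x (n+1), lagPoly_eval a x n,
        Polynomial.eval_mul, Polynomial.eval_sub, Polynomial.eval_C, Polynomial.eval_X]
      field_simp

lemma lagPoly_coeff_gt (a : ℝ) : ∀ n j, n < j → (lagPoly a n).coeff j = 0
  | 0, j, hj => by
      simp only [lagPoly, Polynomial.coeff_one]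
      simp; omega
  | 1, j, hj => by
      simp only [lagPoly, Polynomial.coeff_sub, Polynomial.coeff_C, Polynomial.coeff_X]
      rw [if_neg (by omega), if_neg (by omega)]; ring
  | (n + 2), j, hj => by
      have h1 : (X * lagPoly a (n+1)).coeff j = 0 := by
        rcases Nat.exists_eq_add_of_lt hj with ⟨c, rfl⟩
        rw [show n + 2 + c + 1 = (n + 2 + c) + 1 by ring, Polynomial.coeff_X_mul]
        exact lagPoly_coeff_gt a (n+1) (n + 2 + c) (by omega)
      simp only [lagPoly, Polynomial.coeff_C_mul, sub_mul, Polynomial.coeff_sub,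
        Polynomial.coeff_C_mul, h1, lagPoly_coeff_gt a (n+1) j (by omega),
        lagPoly_coeff_gt a n j (by omega)]
      ring

lemma lagPoly_coeff_self (a : ℝ) : ∀ n, (lagPoly a n).coeff n = (-1) ^ n / n.factorial
  | 0 => by simp [lagPoly]
  | 1 => by
      simp only [lagPoly, Polynomial.coeff_sub, Polynomial.coeff_C, Polynomial.coeff_X]
      norm_num
  | (n + 2) => by
      have h1 : (X * lagPoly a (n+1)).coeff (n+2) = (-1:ℝ) ^ (n+1) / (n+1).factorial := by
        rw [show n + 2 = (n + 1) + 1 by ring, Polynomial.coeff_X_mul]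
        exact lagPoly_coeff_self a (n+1)
      have e1 : (C (2*((n:ℝ)+1)+a+1) * lagPoly a (n+1)).coeff (n+2) = 0 := by
        rw [Polynomial.coeff_C_mul, lagPoly_coeff_gt a (n+1) (n+2) (by omega)]; ring
      have e3 : (C ((n:ℝ)+1+a) * lagPoly a n).coeff (n+2) = 0 := by
        rw [Polynomial.coeff_C_mul, lagPoly_coeff_gt a n (n+2) (by omega)]; ring
      rw [lagPoly, Polynomial.coeff_C_mul, Polynomial.coeff_sub, sub_mul,
        Polynomial.coeff_sub, e1, e3, h1]
      have hf : ((n+2).factorial : ℝ) = ((n:ℝ)+2) * (n+1).factorial := by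
        rw [show n + 2 = (n+1) + 1 by ring, Nat.factorial_succ]; push_cast; ring
      rw [hf]
      have h2 : ((n+1).factorial : ℝ) ≠ 0 := Nat.cast_ne_zero.2 (Nat.factorial_ne_zero _)
      have h3 : ((n:ℝ)+2) ≠ 0 := by positivity
      field_simp
      ring

lemma lagPoly_natDegree_le (a : ℝ) (n : ℕ) : (lagPoly a n).natDegree ≤ n :=
  Polynomial.natDegree_le_iff_coeff_eq_zero.2 fun m hm => lagPoly_coeff_gt a n m hm

lemma chooseId (j n : ℕ) :
    ((n : ℝ) + 1) * (j.choose (n + 1) : ℝ) = ((j : ℝ) - n) * (j.choose n : ℝ) := by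
  rcases le_or_gt (n + 1) j with h | h
  · have h0 := Nat.choose_succ_right_eq j n
    have h1 : ((j - n : ℕ) : ℝ) = (j : ℝ) - n := by
      rw [Nat.cast_sub (by omega)]
    have h2 := congrArg (fun t : ℕ => (t : ℝ)) h0
    push_cast at h2
    rw [← h1]; push_cast; linarith
  · rcases eq_or_lt_of_le (Nat.lt_succ_iff.mp h) with h' | h'
    · subst h'; simp [Nat.choose_succ_self]
    · rw [Nat.choose_eq_zero_of_lt (by omega), Nat.choose_eq_zero_of_lt (by omega)]
      ring

lemma integrableOn_monomial (a : ℝ) (ha : -1 < a) (j : ℕ) :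
    IntegrableOn (fun x : ℝ => x ^ j * (x ^ a * Real.exp (-x))) (Set.Ioi 0) := by
  have h : (0 : ℝ) < a + j + 1 := by
    have : (0:ℝ) ≤ j := Nat.cast_nonneg j
    linarith
  refine (Real.GammaIntegral_convergent h).congr_fun ?_ measurableSet_Ioi
  intro x hx
  have hx0 : (0 : ℝ) < x := hx
  simp only
  rw [show a + (j:ℝ) + 1 - 1 = a + j by ring, Real.rpow_add hx0, Real.rpow_natCast]
  ring

lemma moment_one (a : ℝ) (ha : -1 < a) (j : ℕ) :
    ∫ x in Set.Ioi (0:ℝ), x ^ j * (x ^ a * Real.exp (-x)) = Real.Gamma (a + j + 1) := by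
  have h : (0 : ℝ) < a + j + 1 := by
    have : (0:ℝ) ≤ j := Nat.cast_nonneg j
    linarith
  rw [Real.Gamma_eq_integral h]
  refine setIntegral_congr_fun measurableSet_Ioi fun x hx => ?_
  have hx0 : (0 : ℝ) < x := hx
  rw [show a + (j:ℝ) + 1 - 1 = a + j by ring, Real.rpow_add hx0, Real.rpow_natCast]
  ring

lemma lag_expand (a : ℝ) (n j : ℕ) (x : ℝ) :
    x ^ j * laguerreP a n x * (x ^ a * Real.exp (-x)) =
      ∑ c ∈ range (n+1),
        (lagPoly a n).coeff c * (x ^ (j + c) * (x ^ a * Real.exp (-x))) := by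
  rw [← lagPoly_eval,
    Polynomial.eval_eq_sum_range' (Nat.lt_succ_of_le (lagPoly_natDegree_le a n)) x,
    Finset.mul_sum, Finset.sum_mul]
  exact Finset.sum_congr rfl fun c _ => by ring

lemma integrableOn_lag (a : ℝ) (ha : -1 < a) (n j : ℕ) :
    IntegrableOn (fun x : ℝ => x ^ j * laguerreP a n x * (x ^ a * Real.exp (-x)))
      (Set.Ioi 0) := by
  have : (fun x : ℝ => x ^ j * laguerreP a n x * (x ^ a * Real.exp (-x))) =
      fun x => ∑ c ∈ range (n + 1),
        (lagPoly a n).coeff c * (x ^ (j + c) * (x ^ a * Real.exp (-x))) :=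
    funext (lag_expand a n j)
  rw [this]
  exact integrable_finset_sum _ fun c _ =>
    (integrableOn_monomial a ha (j + c)).const_mul _

lemma lag_moment (a : ℝ) (ha : -1 < a) :
    ∀ (n j : ℕ), ∫ x in Set.Ioi (0:ℝ), x ^ j * laguerreP a n x * (x ^ a * Real.exp (-x)) =
      (-1 : ℝ) ^ n * (j.choose n : ℝ) * Real.Gamma (a + j + 1)
  | 0, j => by
      simp only [laguerreP, mul_one, Nat.choose_zero_right, pow_zero, Nat.cast_one]
      rw [moment_one a ha j]; ring
  | 1, j => by
      have key : ∀ x : ℝ, x ^ j * laguerreP a 1 x * (x ^ a * Real.exp (-x)) =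
          (a + 1) * (x ^ j * (x ^ a * Real.exp (-x)))
            - x ^ (j+1) * (x ^ a * Real.exp (-x)) := by
        intro x; simp only [laguerreP]; ring
      rw [show (fun x : ℝ => x ^ j * laguerreP a 1 x * (x ^ a * Real.exp (-x))) =
        fun x => (a + 1) * (x ^ j * (x ^ a * Real.exp (-x)))
            - x ^ (j+1) * (x ^ a * Real.exp (-x)) from funext key,
        integral_sub ((integrableOn_monomial a ha j).const_mul _)
          (integrableOn_monomial a ha (j+1)),
        integral_const_mul, moment_one a ha j, moment_one a ha (j+1)]
      have hpos : (0:ℝ) < a + j + 1 := by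
        have : (0:ℝ) ≤ j := Nat.cast_nonneg j
        linarith
      have hG : Real.Gamma (a + ((j+1 : ℕ) : ℝ) + 1) = (a+j+1) * Real.Gamma (a+j+1) := by
        push_cast
        rw [show a + ((j:ℝ)+1) + 1 = (a+(j:ℝ)+1)+1 by ring, Real.Gamma_add_one hpos.ne']
      rw [hG, Nat.choose_one_right]
      ring
  | (n + 2), j => by
      have hn2 : ((n:ℝ) + 2) ≠ 0 := by positivity
      have key : ∀ x : ℝ, x ^ j * laguerreP a (n+2) x * (x ^ a * Real.exp (-x)) =
          (((n:ℝ)+2)⁻¹ * (2*((n:ℝ)+1)+a+1)) *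
              (x ^ j * laguerreP a (n+1) x * (x ^ a * Real.exp (-x)))
            - ((n:ℝ)+2)⁻¹ * (x ^ (j+1) * laguerreP a (n+1) x * (x ^ a * Real.exp (-x)))
            - (((n:ℝ)+2)⁻¹ * ((n:ℝ)+1+a)) *
              (x ^ j * laguerreP a n x * (x ^ a * Real.exp (-x))) := by
        intro x; simp only [laguerreP]; field_simp; ring
      rw [show (fun x : ℝ => x ^ j * laguerreP a (n+2) x * (x ^ a * Real.exp (-x))) =
        fun x => (((n:ℝ)+2)⁻¹ * (2*((n:ℝ)+1)+a+1)) *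
              (x ^ j * laguerreP a (n+1) x * (x ^ a * Real.exp (-x)))
            - ((n:ℝ)+2)⁻¹ * (x ^ (j+1) * laguerreP a (n+1) x * (x ^ a * Real.exp (-x)))
            - (((n:ℝ)+2)⁻¹ * ((n:ℝ)+1+a)) *
              (x ^ j * laguerreP a n x * (x ^ a * Real.exp (-x))) from funext key,
        integral_sub (f := fun x : ℝ => (((n:ℝ)+2)⁻¹ * (2*((n:ℝ)+1)+a+1)) *
              (x ^ j * laguerreP a (n+1) x * (x ^ a * Real.exp (-x)))
            - ((n:ℝ)+2)⁻¹ * (x ^ (j+1) * laguerreP a (n+1) x * (x ^ a * Real.exp (-x))))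
          (Integrable.sub ((integrableOn_lag a ha (n+1) j).const_mul _)
            ((integrableOn_lag a ha (n+1) (j+1)).const_mul _))
          ((integrableOn_lag a ha n j).const_mul _),
        integral_sub ((integrableOn_lag a ha (n+1) j).const_mul _)
          ((integrableOn_lag a ha (n+1) (j+1)).const_mul _),
        integral_const_mul, integral_const_mul, integral_const_mul,
        lag_moment a ha (n+1) j, lag_moment a ha (n+1) (j+1), lag_moment a ha n j]
      have hpos : (0:ℝ) < a + j + 1 := by
        have : (0:ℝ) ≤ j := Nat.cast_nonneg j
        linarith
      have hG : Real.Gamma (a + ((j+1 : ℕ) : ℝ) + 1) = (a+j+1) * Real.Gamma (a+j+1) := by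
        push_cast
        rw [show a + ((j:ℝ)+1) + 1 = (a+(j:ℝ)+1)+1 by ring, Real.Gamma_add_one hpos.ne']
      have hP : (((j+1).choose (n+1) : ℕ) : ℝ) = (j.choose n : ℝ) + (j.choose (n+1) : ℝ) := by
        rw [Nat.choose_succ_succ]; push_cast; ring
      have hn1 : ((n:ℝ) + 1) ≠ 0 := by positivity
      have hC2 : ((j.choose (n+1+1) : ℕ) : ℝ) =
          ((j:ℝ) - (n:ℝ) - 1) * (j.choose (n+1) : ℝ) / ((n:ℝ)+2) := by
        have h := chooseId j (n+1)
        push_cast at h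
        field_simp
        linarith
      have hC1 : ((j.choose (n+1) : ℕ) : ℝ) =
          ((j:ℝ) - (n:ℝ)) * (j.choose n : ℝ) / ((n:ℝ)+1) := by
        have h := chooseId j n
        field_simp
        linarith
      rw [hG, hP, show n+2 = n+1+1 from rfl, hC2, hC1]
      field_simp
      ring

lemma lag_inner_eq_sum (a : ℝ) (ha : -1 < a) (n m : ℕ) :
    ∫ x in Set.Ioi (0:ℝ),
        laguerreP a n x * laguerreP a m x * (x ^ a * Real.exp (-x)) =
      ∑ c ∈ range (m+1), (lagPoly a m).coeff c *
        ((-1:ℝ) ^ n * (c.choose n : ℝ) * Real.Gamma (a + c + 1)) := by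
  have key : ∀ x : ℝ, laguerreP a n x * laguerreP a m x * (x ^ a * Real.exp (-x)) =
      ∑ c ∈ range (m+1), (lagPoly a m).coeff c *
        (x ^ c * laguerreP a n x * (x ^ a * Real.exp (-x))) := by
    intro x
    rw [← lagPoly_eval a x m,
      Polynomial.eval_eq_sum_range' (Nat.lt_succ_of_le (lagPoly_natDegree_le a m)) x,
      Finset.mul_sum, Finset.sum_mul]
    exact Finset.sum_congr rfl fun c _ => by ring
  rw [show (fun x : ℝ => laguerreP a n x * laguerreP a m x * (x ^ a * Real.exp (-x))) =
      fun x => ∑ c ∈ range (m+1), (lagPoly a m).coeff c *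
        (x ^ c * laguerreP a n x * (x ^ a * Real.exp (-x))) from funext key,
    integral_finset_sum _ fun c _ => (integrableOn_lag a ha n c).const_mul _]
  exact Finset.sum_congr rfl fun c _ => by rw [integral_const_mul, lag_moment a ha n c]

lemma lag_inner_ne (a : ℝ) (ha : -1 < a) {n m : ℕ} (h : n ≠ m) :
    ∫ x in Set.Ioi (0:ℝ),
        laguerreP a n x * laguerreP a m x * (x ^ a * Real.exp (-x)) = 0 := by
  rcases lt_or_gt_of_ne h with h' | h'
  · rw [show (fun x : ℝ => laguerreP a n x * laguerreP a m x * (x ^ a * Real.exp (-x))) =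
        fun x => laguerreP a m x * laguerreP a n x * (x ^ a * Real.exp (-x)) from
        funext fun x => by ring, lag_inner_eq_sum a ha m n]
    refine Finset.sum_eq_zero fun c hc => ?_
    rw [Nat.choose_eq_zero_of_lt (by simp at hc; omega)]
    ring
  · rw [lag_inner_eq_sum a ha n m]
    refine Finset.sum_eq_zero fun c hc => ?_
    rw [Nat.choose_eq_zero_of_lt (by simp at hc; omega)]
    ring

lemma lag_inner_self (a : ℝ) (ha : -1 < a) (n : ℕ) :
    ∫ x in Set.Ioi (0:ℝ),
        laguerreP a n x * laguerreP a n x * (x ^ a * Real.exp (-x)) =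
      Real.Gamma (a + n + 1) / n.factorial := by
  rw [lag_inner_eq_sum a ha n n]
  rw [Finset.sum_eq_single n]
  · rw [lagPoly_coeff_self, Nat.choose_self]
    have h2 : ((n).factorial : ℝ) ≠ 0 := Nat.cast_ne_zero.2 (Nat.factorial_ne_zero _)
    field_simp
    rw [← pow_mul, mul_comm n 2, pow_mul]
    norm_num
  · intro c hc hcn
    rw [Nat.choose_eq_zero_of_lt (by simp at hc; omega)]
    ring
  · intro hn
    simp at hn

lemma lag_xinner_succ (a : ℝ) (ha : -1 < a) (n : ℕ) :
    ∫ x in Set.Ioi (0:ℝ),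
        x * laguerreP a n x * laguerreP a (n+1) x * (x ^ a * Real.exp (-x)) =
      -Real.Gamma (a + n + 2) / n.factorial := by
  have key : ∀ x : ℝ, x * laguerreP a n x * laguerreP a (n+1) x * (x ^ a * Real.exp (-x)) =
      ∑ c ∈ range (n+1), (lagPoly a n).coeff c *
        (x ^ (c+1) * laguerreP a (n+1) x * (x ^ a * Real.exp (-x))) := by
    intro x
    rw [show x * laguerreP a n x * laguerreP a (n+1) x * (x ^ a * Real.exp (-x)) =
      laguerreP a n x * (x * laguerreP a (n+1) x * (x ^ a * Real.exp (-x))) by ring,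
      ← lagPoly_eval a x n,
      Polynomial.eval_eq_sum_range' (Nat.lt_succ_of_le (lagPoly_natDegree_le a n)) x,
      Finset.sum_mul]
    exact Finset.sum_congr rfl fun c _ => by ring
  rw [show (fun x : ℝ => x * laguerreP a n x * laguerreP a (n+1) x * (x ^ a * Real.exp (-x))) =
      fun x => ∑ c ∈ range (n+1), (lagPoly a n).coeff c *
        (x ^ (c+1) * laguerreP a (n+1) x * (x ^ a * Real.exp (-x))) from funext key,
    integral_finset_sum _ fun c _ => (integrableOn_lag a ha (n+1) (c+1)).const_mul _]
  have : ∀ c ∈ range (n+1), (lagPoly a n).coeff c *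
      ∫ x in Set.Ioi (0:ℝ), x ^ (c+1) * laguerreP a (n+1) x * (x ^ a * Real.exp (-x)) =
      if c = n then (lagPoly a n).coeff c *
        ((-1:ℝ) ^ (n+1) * Real.Gamma (a + n + 2)) else 0 := by
    intro c hc
    rw [lag_moment a ha (n+1) (c+1)]
    by_cases hcn : c = n
    · subst hcn
      rw [if_pos rfl, Nat.choose_self]
      push_cast
      ring_nf
    · rw [if_neg hcn, Nat.choose_eq_zero_of_lt (by simp at hc; omega)]
      ring
  simp only [integral_const_mul]
  rw [Finset.sum_congr rfl this]
  rw [Finset.sum_ite_eq' (range (n+1)) n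
    (fun c => (lagPoly a n).coeff c * ((-1:ℝ) ^ (n+1) * Real.Gamma (a + n + 2)))]
  rw [if_pos (by simp), lagPoly_coeff_self]
  have h2 : ((n).factorial : ℝ) ≠ 0 := Nat.cast_ne_zero.2 (Nat.factorial_ne_zero _)
  field_simp
  have hsq : (-1:ℝ)^n * (-1:ℝ)^n = 1 := by rw [← mul_pow]; norm_num
  rw [pow_succ]
  linear_combination (-Real.Gamma (a + (n:ℝ) + 2)) * hsq

/-- Matrix elements of the creation operators for the multiple Laguerre polynomials: if
`|m| = |k| + 1` then `∫ xᵢ L^α_k L^α_m x^α e^{-|x|₁} dx = -(kᵢ+1) ∏ⱼ Γ((k+eᵢ)ⱼ+αⱼ+1)/((k+eᵢ)ⱼ)!`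
when `m = k + eᵢ` and `0` otherwise (so `a⁺_{i|n} L^α_k = -(kᵢ+1) L^α_{k+eᵢ}`). -/

theorem multiLaguerre_creation_matrix_elements
    (d : ℕ) (hd : 1 ≤ d) (α : Fin d → ℝ) (hα : ∀ j, -1 < α j)
    (k m : Fin d → ℕ) (hkm : ∑ j, m j = (∑ j, k j) + 1) (i : Fin d) :
    ∫ x in Set.univ.pi fun _ : Fin d => Set.Ioi (0 : ℝ),
      x i * multiLaguerre α k x * multiLaguerre α m x *
        ((∏ j, x j ^ α j) * Real.exp (-∑ j, x j)) =
      if m = Function.update k i (k i + 1) then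
        -((k i : ℝ) + 1) *
          ∏ j, Real.Gamma ((Function.update k i (k i + 1) j : ℝ) + α j + 1) /
            ((Function.update k i (k i + 1) j).factorial : ℝ)
      else 0 := by
  set f : Fin d → ℝ → ℝ := fun j t =>
    (if j = i then t else 1) *
      (laguerreP (α j) (k j) t * laguerreP (α j) (m j) t *
        (t ^ (α j) * Real.exp (-t))) with hf
  have hS : MeasurableSet (Set.univ.pi fun _ : Fin d => Set.Ioi (0:ℝ)) :=
    MeasurableSet.univ_pi fun _ => measurableSet_Ioi
  have step1 : ∀ x : Fin d → ℝ,
      x i * multiLaguerre α k x * multiLaguerre α m x *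
        ((∏ j, x j ^ α j) * Real.exp (-∑ j, x j)) = ∏ j, f j (x j) := by
    intro x
    simp only [hf, multiLaguerre]
    rw [Finset.prod_mul_distrib, Finset.prod_mul_distrib,
      Finset.prod_ite_eq' Finset.univ i (fun j => x j), if_pos (Finset.mem_univ i),
      Finset.prod_mul_distrib, Finset.prod_mul_distrib,
      show Real.exp (-∑ j, x j) = ∏ j, Real.exp (-x j) by
        rw [← Real.exp_sum, ← Finset.sum_neg_distrib]]
    ring
  have hind : ∀ x : Fin d → ℝ,
      (Set.univ.pi fun _ : Fin d => Set.Ioi (0:ℝ)).indicator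
        (fun y => ∏ j, f j (y j)) x = ∏ j, (Set.Ioi (0:ℝ)).indicator (f j) (x j) := by
    intro x
    by_cases hx : x ∈ Set.univ.pi fun _ : Fin d => Set.Ioi (0:ℝ)
    · rw [Set.indicator_of_mem hx]
      exact Finset.prod_congr rfl fun j _ =>
        (Set.indicator_of_mem (hx j (Set.mem_univ _)) _).symm
    · rw [Set.indicator_of_notMem hx]
      obtain ⟨j0, hj0⟩ : ∃ j, x j ∉ Set.Ioi (0:ℝ) := by
        by_contra hcon
        push_neg at hcon
        exact hx fun j _ => hcon j
      exact (Finset.prod_eq_zero (Finset.mem_univ j0)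
        (Set.indicator_of_notMem hj0 _)).symm
  have key : (∫ x in Set.univ.pi fun _ : Fin d => Set.Ioi (0:ℝ),
      x i * multiLaguerre α k x * multiLaguerre α m x *
        ((∏ j, x j ^ α j) * Real.exp (-∑ j, x j))) =
      ∏ j, ∫ t in Set.Ioi (0:ℝ), f j t := by
    rw [setIntegral_congr_fun hS fun x _ => step1 x, ← integral_indicator hS]
    rw [show ((Set.univ.pi fun _ : Fin d => Set.Ioi (0:ℝ)).indicator
        fun y => ∏ j, f j (y j)) = fun x => ∏ j, (Set.Ioi (0:ℝ)).indicator (f j) (x j)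
      from funext hind]
    rw [MeasureTheory.integral_fintype_prod_volume_eq_prod (ι := Fin d)
      (fun j => (Set.Ioi (0:ℝ)).indicator (f j))]
    exact Finset.prod_congr rfl fun j _ => integral_indicator measurableSet_Ioi
  rw [key]
  by_cases hm : m = Function.update k i (k i + 1)
  · rw [if_pos hm]
    subst hm
    set G : Fin d → ℝ := fun j =>
      Real.Gamma ((Function.update k i (k i + 1) j : ℝ) + α j + 1) /
        ((Function.update k i (k i + 1) j).factorial : ℝ) with hG
    have hfj : ∀ j ∈ Finset.univ.erase i, (∫ t in Set.Ioi (0:ℝ), f j t) = G j := by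
      intro j hj
      have hji : j ≠ i := Finset.ne_of_mem_erase hj
      have h1 : ∀ t : ℝ, f j t =
          laguerreP (α j) (k j) t * laguerreP (α j) (k j) t *
            (t ^ (α j) * Real.exp (-t)) := by
        intro t; simp [hf, hji, Function.update_of_ne hji]
      rw [show f j = fun t => laguerreP (α j) (k j) t * laguerreP (α j) (k j) t *
            (t ^ (α j) * Real.exp (-t)) from funext h1, lag_inner_self (α j) (hα j) (k j),
        hG]
      simp only [Function.update_of_ne hji]
      rw [show α j + (k j : ℝ) + 1 = (k j : ℝ) + α j + 1 by ring]
    have hfi : (∫ t in Set.Ioi (0:ℝ), f i t) = -((k i : ℝ) + 1) * G i := by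
      have h1 : ∀ t : ℝ, f i t =
          t * laguerreP (α i) (k i) t * laguerreP (α i) (k i + 1) t *
            (t ^ (α i) * Real.exp (-t)) := by
        intro t; simp [hf, Function.update_self]; ring
      rw [show f i = fun t => t * laguerreP (α i) (k i) t * laguerreP (α i) (k i + 1) t *
            (t ^ (α i) * Real.exp (-t)) from funext h1,
        lag_xinner_succ (α i) (hα i) (k i), hG]
      simp only [Function.update_self]
      have h2 : ((k i + 1).factorial : ℝ) = ((k i : ℝ) + 1) * (k i).factorial := by
        rw [Nat.factorial_succ]; push_cast; ring
      have h3 : ((k i).factorial : ℝ) ≠ 0 := Nat.cast_ne_zero.2 (Nat.factorial_ne_zero _)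
      have h4 : Real.Gamma (α i + (k i : ℝ) + 2) =
          Real.Gamma (((k i : ℕ) + 1 : ℕ) + α i + 1) := by
        congr 1; push_cast; ring
      rw [h4, h2]
      have h5 : ((k i : ℝ) + 1) ≠ 0 := by positivity
      field_simp
    rw [← Finset.mul_prod_erase Finset.univ (fun j => ∫ t in Set.Ioi (0:ℝ), f j t)
        (Finset.mem_univ i),
      ← Finset.mul_prod_erase Finset.univ G (Finset.mem_univ i),
      Finset.prod_congr rfl hfj, hfi]
    ring
  · rw [if_neg hm]
    obtain ⟨j0, hj0i, hj0⟩ : ∃ j0, j0 ≠ i ∧ m j0 ≠ k j0 := by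
      by_contra hcon
      push_neg at hcon
      apply hm
      have hmi : m i = k i + 1 := by
        have h1 : ∑ j, m j = m i + ∑ j ∈ Finset.univ.erase i, m j := by
          rw [Finset.add_sum_erase _ _ (Finset.mem_univ i)]
        have h2 : ∑ j, k j = k i + ∑ j ∈ Finset.univ.erase i, k j := by
          rw [Finset.add_sum_erase _ _ (Finset.mem_univ i)]
        have h3 : ∑ j ∈ Finset.univ.erase i, m j = ∑ j ∈ Finset.univ.erase i, k j :=
          Finset.sum_congr rfl fun j hj => hcon j (Finset.ne_of_mem_erase hj)
        omega
      funext j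
      by_cases hji : j = i
      · subst hji; rw [Function.update_self]; exact hmi
      · rw [Function.update_of_ne hji]; exact hcon j hji
    refine Finset.prod_eq_zero (Finset.mem_univ j0) ?_
    have : ∀ t : ℝ, f j0 t =
        laguerreP (α j0) (k j0) t * laguerreP (α j0) (m j0) t *
          (t ^ (α j0) * Real.exp (-t)) := by
      intro t; simp [hf, hj0i]
    rw [show f j0 = fun t => laguerreP (α j0) (k j0) t * laguerreP (α j0) (m j0) t *
          (t ^ (α j0) * Real.exp (-t)) from funext this]
    exact lag_inner_ne (α j0) (hα j0) (Ne.symm hj0)
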